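/- Let g be a nondegenerate symmetric bilinear form on R^n such that the restriction of g to R^{n-1} (span of first n-1 standard basis vectors) is nondegenerate, and let h ⊆ so(g) be a Lie subalgebra. Then there is a linear subspace U of (R^{n-1})* such that the first prolongation of the tableau K_h equals S^2 U ⊗ span(v), where v is a nonzero vector spanning the g-orthogonal complement of R^{n-1}. In particular, every element ∇ of K_h^{(1)} satisfies ∇_u w ∈ span(v) for all u,w ∈ R^{n-1}. -/

import Mathlib

/-!
The partial maps `∇_u` of an element of the prolongation are skew for `g`, so
`T(u, w, y) = g(∇_u w, y)` is symmetric in its first two arguments and skew in its last two;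
such a trilinear form vanishes. Hence every value `∇_u w` is `g`-orthogonal to the hyperplane
`R^{n-1}`, on which `g` is nondegenerate, and therefore lies on the line spanned by `v`. Writing
`∇_u w = B(u, w) v`, the tableau condition on `∇` becomes the condition that each `B(u, ·) ⊗ v`
lie in `K_h`, i.e. that `B` take values in the space `U` of functionals `l` with `l ⊗ v ∈ K_h`.
-/

attribute [local instance 100] LieRing.ofAssociativeRing

open LinearMap

theorem eq_zero_of_symm_of_antisymm {α M : Type*} [AddCommGroup M] [IsAddTorsionFree M]
    (T : α → α → α → M) (hsymm : ∀ u w y, T u w y = T w u y)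
    (hanti : ∀ u w y, T u w y = -T u y w) (u w y : α) : T u w y = 0 := by
  refine self_eq_neg.mp ?_
  calc T u w y = -T u y w := hanti u w y
    _ = -T y u w := by rw [hsymm]
    _ = T y w u := by rw [hanti y u w, neg_neg]
    _ = T w y u := hsymm y w u
    _ = -T w u y := hanti w y u
    _ = -T u w y := by rw [hsymm]

section Prolongation

variable {K E : Type*} [Field K] [AddCommGroup E] [Module K E]

def tableau (h : Submodule K (Module.End K E)) (P : Submodule K E) : Submodule K (P →ₗ[K] E) :=
  h.map (lcomp K E P.subtype)

theorem mem_tableau {h : Submodule K (Module.End K E)} {P : Submodule K E} {f : P →ₗ[K] E} :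
    f ∈ tableau h P ↔ ∃ F ∈ h, ∀ w : P, F w = f w := by
  simp only [tableau, Submodule.mem_map, LinearMap.ext_iff]
  rfl

def lineCoefficients (h : Submodule K (Module.End K E)) (P : Submodule K E) (v : E) :
    Submodule K (P →ₗ[K] K) :=
  (tableau h P).comap (smulRightₗ.flip v)

theorem mem_lineCoefficients {h : Submodule K (Module.End K E)} {P : Submodule K E} {v : E}
    {l : P →ₗ[K] K} : l ∈ lineCoefficients h P v ↔ ∃ F ∈ h, ∀ w : P, F w = l w • v :=
  mem_tableau

variable (g : E →ₗ[K] E →ₗ[K] K)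

theorem eq_smul_of_forall_mem_ker_apply_eq_zero {φ : E →ₗ[K] K}
    (hnd : ∀ x ∈ ker φ, (∀ y ∈ ker φ, g x y = 0) → x = 0) {v : E} (hv : φ v ≠ 0)
    (hvperp : ∀ y ∈ ker φ, g v y = 0) {x : E} (hx : ∀ y ∈ ker φ, g x y = 0) :
    x = ((φ v)⁻¹ * φ x) • v := by
  refine sub_eq_zero.mp (hnd _ ?_ fun y hy => ?_)
  · simp [mem_ker, mul_comm, hv]
  · simp [hx y hy, hvperp y hy]

variable [CharZero K]

theorem apply_prolongation_apply_eq_zero (hsymm : ∀ x y, g x y = g y x) {P : Submodule K E}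
    (D : P → P → E) (hD : ∀ u w, D u w = D w u) (F : P → Module.End K E)
    (hskew : ∀ u x y, g (F u x) y = -g x (F u y)) (hFD : ∀ u (w : P), F u w = D u w) (u w y : P) :
    g (D u w) y = 0 :=
  eq_zero_of_symm_of_antisymm (fun u w (y : P) => g (D u w) y) (fun u w y => by rw [hD])
    (fun u w y => by rw [← hFD, hskew, hFD, hsymm]) u w y

end Prolongation

theorem stmt_4_general {n : ℕ}
    (g : (Fin (n+1) → ℝ) →ₗ[ℝ] (Fin (n+1) → ℝ) →ₗ[ℝ] ℝ)
    (hsymm : ∀ x y, g x y = g y x)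
    (h : LieSubalgebra ℝ (Module.End ℝ (Fin (n+1) → ℝ)))
    (hskew : ∀ F ∈ h, ∀ x y, g (F x) y = - g x (F y))
    (P : Submodule ℝ (Fin (n+1) → ℝ))
    (hP : P = LinearMap.ker (LinearMap.proj (Fin.last n) : (Fin (n+1) → ℝ) →ₗ[ℝ] ℝ))
    (hPnd : ∀ x ∈ P, (∀ y ∈ P, g x y = 0) → x = 0)
    (v : Fin (n+1) → ℝ) (hv0 : v ≠ 0) (hvperp : ∀ y ∈ P, g v y = 0) :
    ∃ U : Submodule ℝ (P →ₗ[ℝ] ℝ),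
      ∀ D : P →ₗ[ℝ] P →ₗ[ℝ] (Fin (n+1) → ℝ), (∀ u w : P, D u w = D w u) →
        ((∀ u : P, ∃ F ∈ h, ∀ w : P, F (w : Fin (n+1) → ℝ) = D u w) ↔
          ∃ B : P →ₗ[ℝ] P →ₗ[ℝ] ℝ, (∀ u w : P, B u w = B w u) ∧ (∀ u : P, B u ∈ U) ∧
            ∀ u w : P, D u w = B u w • v) := by
  subst hP
  set φ : (Fin (n+1) → ℝ) →ₗ[ℝ] ℝ := LinearMap.proj (Fin.last n)
  have hφv : φ v ≠ 0 := fun hv => hv0 (hPnd v hv hvperp)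
  refine ⟨lineCoefficients h.toSubmodule (ker φ) v, fun D hD => ⟨fun hprol => ?_, ?_⟩⟩
  · choose F hFh hFD using hprol
    have hline : ∀ u w, D u w = ((φ v)⁻¹ * φ (D u w)) • v := fun u w =>
      eq_smul_of_forall_mem_ker_apply_eq_zero g hPnd hφv hvperp fun y hy =>
        apply_prolongation_apply_eq_zero g hsymm (fun u w => D u w) hD F
          (fun u => hskew _ (hFh u)) hFD u w ⟨y, hy⟩
    refine ⟨D.compr₂ ((φ v)⁻¹ • φ), fun u w => by simp [hD u w], fun u => ?_, fun u w => ?_⟩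
    · exact mem_lineCoefficients.mpr ⟨F u, hFh u, fun w => by simpa [hFD] using hline u w⟩
    · simpa using hline u w
  · rintro ⟨B, -, hBU, hBD⟩ u
    obtain ⟨F, hF, hFB⟩ := mem_lineCoefficients.mp (hBU u)
    exact ⟨F, hF, fun w => by rw [hFB, hBD]⟩

theorem stmt_4 {n : ℕ}
    (g : (Fin (n+1) → ℝ) →ₗ[ℝ] (Fin (n+1) → ℝ) →ₗ[ℝ] ℝ)
    (hnd : ∀ x, (∀ y, g x y = 0) → x = 0)
    (hsymm : ∀ x y, g x y = g y x)
    (h : LieSubalgebra ℝ (Module.End ℝ (Fin (n+1) → ℝ)))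
    (hskew : ∀ F ∈ h, ∀ x y, g (F x) y = - g x (F y))
    (P : Submodule ℝ (Fin (n+1) → ℝ))
    (hP : P = LinearMap.ker (LinearMap.proj (Fin.last n) : (Fin (n+1) → ℝ) →ₗ[ℝ] ℝ))
    (hPnd : ∀ x ∈ P, (∀ y ∈ P, g x y = 0) → x = 0)
    (v : Fin (n+1) → ℝ) (hv0 : v ≠ 0) (hvperp : ∀ y ∈ P, g v y = 0) :
    ∃ U : Submodule ℝ (P →ₗ[ℝ] ℝ),
      ∀ D : P →ₗ[ℝ] P →ₗ[ℝ] (Fin (n+1) → ℝ), (∀ u w : P, D u w = D w u) →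
        ((∀ u : P, ∃ F ∈ h, ∀ w : P, F (w : Fin (n+1) → ℝ) = D u w) ↔
          ∃ B : P →ₗ[ℝ] P →ₗ[ℝ] ℝ, (∀ u w : P, B u w = B w u) ∧ (∀ u : P, B u ∈ U) ∧
            ∀ u w : P, D u w = B u w • v) :=
  stmt_4_general g hsymm h hskew P hP hPnd v hv0 hvperp
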